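/- arXiv:1812.10554 — 7 statements merged into one kernel-verified Lean document; each statement's English description precedes it below -/
import Mathlib

section
/- In a finite p-group that is not cyclic, the subgroup generated by any conjugacy class is a proper subgroup. -/
open Subgroup

theorem Subgroup.closure_setOf_isConj_le {G : Type*} [Group G] {N : Subgroup G} (hN : N.Normal)
    {g : G} (hg : g ∈ N) : closure {x : G | IsConj g x} ≤ N := by
  rw [closure_le]
  rintro x hx
  obtain ⟨c, rfl⟩ := isConj_iff.mp hx
  exact hN.conj_mem g hg c

theorem Group.exists_isCoatom_normal_ge {G : Type*} [Group G] [IsCoatomic (Subgroup G)]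
    [Group.IsNilpotent G] {H : Subgroup G} (hH : H ≠ ⊤) :
    ∃ M : Subgroup G, IsCoatom M ∧ M.Normal ∧ H ≤ M := by
  obtain ⟨M, hM, hHM⟩ := (eq_top_or_exists_le_coatom H).resolve_left hH
  exact ⟨M, hM, NormalizerCondition.normal_of_coatom M normalizerCondition_of_isNilpotent hM, hHM⟩

/-- In a finite p-group that is not cyclic, the subgroup generated by any
conjugacy class is a proper subgroup. -/
theorem pGroup_closure_conjClass_ne_top {p : ℕ} [Fact p.Prime]
    {G : Type*} [Group G] [Finite G] (hp : IsPGroup p G) (hnc : ¬ IsCyclic G)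
    (g : G) : Subgroup.closure {x : G | IsConj g x} ≠ ⊤ := by
  have : Group.IsNilpotent G := hp.isNilpotent
  have hg : zpowers g ≠ ⊤ := fun h => hnc (isCyclic_iff_exists_zpowers_eq_top.mpr ⟨g, h⟩)
  obtain ⟨M, hM, hMnormal, hgM⟩ := Group.exists_isCoatom_normal_ge hg
  exact ne_top_of_le_ne_top hM.1 (closure_setOf_isConj_le hMnormal (hgM (mem_zpowers g)))
end

section
/- In a finite p-group, the conjugacy class of a non-central element is not connected: the subgroup generated by the class does not act transitively by conjugation on the class. -/
/-!
If `H = ⟨C⟩` acted transitively on `C`, the normal closure of `g` in `H` would contain `C`, hence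
be all of `H`. But `H` is a `p`-group, hence nilpotent, so its maximal subgroups are normal and
the normal closure of `g` lies in any maximal subgroup containing `g`; therefore `H = ⟨g⟩` is
abelian, and the conjugates of `g` by `H` reduce to `g` itself, while `C ≠ {g}`.
-/

namespace Subgroup

variable {G : Type*} [Group G]

theorem closure_eq_top_of_normalClosure_eq_top [Group.IsNilpotent G] [IsCoatomic (Subgroup G)]
    {s : Set G} (hs : normalClosure s = ⊤) : closure s = ⊤ := by
  rcases eq_top_or_exists_le_coatom (closure s) with h | ⟨M, hM, hsM⟩
  · exact h
  · have : M.Normal :=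
      NormalizerCondition.normal_of_coatom M Group.normalizerCondition_of_isNilpotent hM
    exact absurd (eq_top_iff.2 (hs ▸ normalClosure_le_normal (subset_closure.trans hsM))) hM.1

theorem normalClosure_singleton_eq_top_of_forall_eq_conj {s : Set G} {x : G}
    (hx : x ∈ closure s) (hs : ∀ y ∈ s, ∃ h ∈ closure s, h * x * h⁻¹ = y) :
    normalClosure {(⟨x, hx⟩ : closure s)} = ⊤ := by
  rw [eq_top_iff, ← map_subtype_le_map_subtype, ← MonoidHom.range_eq_map, range_subtype,
    closure_le]
  intro y hy
  obtain ⟨h, hh, rfl⟩ := hs y hy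
  have hconj := normalClosure_normal.conj_mem _ (subset_normalClosure (Set.mem_singleton ⟨x, hx⟩))
    (⟨h, hh⟩ : closure s)
  exact mem_map_of_mem _ hconj

end Subgroup

open Subgroup in
/-- In a finite p-group, the conjugacy class of a non-central element is not
connected: the subgroup H = ⟨C⟩ generated by the class C does not act
transitively by conjugation on C. -/
theorem pGroup_conjClass_not_connected {p : ℕ} [Fact p.Prime]
    {G : Type*} [Group G] [Finite G] (hp : IsPGroup p G)
    (g : G) (hg : g ∉ Subgroup.center G) :
    ∃ a ∈ {x : G | IsConj g x}, ∃ b ∈ {x : G | IsConj g x},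
      ∀ h ∈ Subgroup.closure {x : G | IsConj g x}, h * a * h⁻¹ ≠ b := by
  by_contra! htrans
  set H := closure {x : G | IsConj g x}
  have hgH : g ∈ H := subset_closure (IsConj.refl g)
  have : Group.IsNilpotent H := (hp.to_subgroup H).isNilpotent
  have hcyclic : zpowers (⟨g, hgH⟩ : H) = ⊤ := by
    rw [zpowers_eq_closure]
    exact closure_eq_top_of_normalClosure_eq_top
      (normalClosure_singleton_eq_top_of_forall_eq_conj hgH (htrans g (IsConj.refl g)))
  obtain ⟨y, hy⟩ : ∃ y, y * g ≠ g * y := by simpa [mem_center_iff] using hg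
  obtain ⟨h, hh, hconj⟩ := htrans g (IsConj.refl g) (y * g * y⁻¹) (isConj_iff.2 ⟨y, rfl⟩)
  obtain ⟨k, hk⟩ := mem_zpowers_iff.1 (hcyclic ▸ mem_top (⟨h, hh⟩ : H))
  have hcomm : Commute (⟨h, hh⟩ : H) ⟨g, hgH⟩ := hk ▸ (Commute.refl _).zpow_left k
  replace hcomm : Commute h g := hcomm.map H.subtype
  rw [hcomm.eq, mul_inv_cancel_right, eq_mul_inv_iff_mul_eq] at hconj
  exact hy hconj.symm
end

section
/- In a finite p-group, a conjugacy class C decomposes into at least two orbits under conjugation by the subgroup H = ⟨C⟩, provided |C| > 1. -/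
/-!
If `H = ⟨C⟩` acted transitively on `C ∋ g`, every element of `C` would be `h g h⁻¹ = ⁅h, g⁆ g`,
so `H = ⟨g⟩ [H, H]`. In the nilpotent group `H` every maximal subgroup is normal with cyclic
quotient, so `[H, H]` lies in the Frattini subgroup and `H = ⟨g⟩` is abelian. Then `C = {g}`.
-/

open Subgroup
open scoped commutatorElement

section

variable {G : Type*} [Group G]

theorem Subgroup.commutator_le_of_isCoatom [Group.IsNilpotent G] {M : Subgroup G}
    (hM : IsCoatom M) : _root_.commutator G ≤ M := by
  have : M.Normal := Group.normalizerCondition_of_isNilpotent.normal_of_coatom M hM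
  obtain ⟨x, hx⟩ := SetLike.exists_of_lt hM.lt_top
  refine Normal.commutator_le_of_self_sup_commutative_eq_top (H := zpowers x) ?_ inferInstance
  exact hM.2 _ (left_lt_sup.mpr fun h => hx.2 (h (mem_zpowers x)))

theorem commutator_le_frattini [Group.IsNilpotent G] : _root_.commutator G ≤ frattini G :=
  le_iInf₂ fun _ => commutator_le_of_isCoatom

theorem IsConj.mem_zpowers_sup_commutator {g x : G} (h : IsConj g x) :
    x ∈ zpowers g ⊔ _root_.commutator G := by
  obtain ⟨c, rfl⟩ := isConj_iff.mp h
  rw [show c * g * c⁻¹ = ⁅c, g⁆ * g by group]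
  exact mul_mem (mem_sup_right (commutator_mem_commutator (mem_top c) (mem_top g)))
    (mem_sup_left (mem_zpowers g))

theorem eq_of_isConj_of_closure_eq_top [Finite G] [Group.IsNilpotent G] {S : Set G}
    (hS : closure S = ⊤) {g : G} (hconj : ∀ x ∈ S, IsConj g x) {x : G} (hx : x ∈ S) :
    x = g := by
  have hgen : zpowers g ⊔ frattini G = ⊤ := by
    refine top_le_iff.mp (hS ▸ (closure_le _).mpr fun y hy => ?_)
    exact sup_le_sup_left commutator_le_frattini _ (hconj y hy).mem_zpowers_sup_commutator
  have : IsCyclic G := isCyclic_iff_exists_zpowers_eq_top.mpr ⟨g, frattini_nongenerating hgen⟩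
  let _ := IsCyclic.commGroup (α := G)
  exact (isConj_iff_eq.mp (hconj x hx)).symm

theorem exists_conj_eq_of_card_orbits_le_one [Finite G] {S : Set G} {K : Subgroup G}
    (h : Nat.card {O : Set G // ∃ a ∈ S, O = {b | ∃ k ∈ K, k * a * k⁻¹ = b}} ≤ 1)
    {a b : G} (ha : a ∈ S) (hb : b ∈ S) : ∃ k ∈ K, k * a * k⁻¹ = b := by
  have := Finite.card_le_one_iff_subsingleton.mp h
  have horbit : {c | ∃ k ∈ K, k * a * k⁻¹ = c} = {c | ∃ k ∈ K, k * b * k⁻¹ = c} :=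
    congrArg Subtype.val (Subsingleton.elim
      (⟨_, a, ha, rfl⟩ : {O : Set G // ∃ a ∈ S, O = {b | ∃ k ∈ K, k * a * k⁻¹ = b}})
      ⟨_, b, hb, rfl⟩)
  have hb' : b ∈ {c | ∃ k ∈ K, k * b * k⁻¹ = c} := ⟨1, one_mem K, by group⟩
  rwa [← horbit] at hb'

end

/-- In a finite p-group, a conjugacy class C with |C| > 1 decomposes into at
least two orbits under conjugation by the subgroup H = ⟨C⟩. -/
theorem pGroup_conjClass_two_orbits {p : ℕ} [Fact p.Prime]
    {G : Type*} [Group G] [Finite G] (hp : IsPGroup p G)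
    (g : G) (C : Set G) (hC : C = {x : G | IsConj g x}) (hC1 : 1 < Nat.card C) :
    2 ≤ Nat.card {O : Set G // ∃ a ∈ C,
      O = {b : G | ∃ h ∈ Subgroup.closure C, h * a * h⁻¹ = b}} := by
  by_contra! hcard
  set H := closure C
  have : Group.IsNilpotent H := (hp.to_subgroup H).isNilpotent
  have hgC : g ∈ C := hC ▸ IsConj.refl g
  have hconj : ∀ x ∈ ((↑) : H → G) ⁻¹' C, IsConj ⟨g, subset_closure hgC⟩ x := fun x hx => by
    obtain ⟨k, hk, hkx⟩ := exists_conj_eq_of_card_orbits_le_one (Nat.le_of_lt_succ hcard) hgC hx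
    exact isConj_iff.mpr ⟨⟨k, hk⟩, Subtype.ext hkx⟩
  have hCg : ∀ x ∈ C, x = g := fun x hx => congrArg Subtype.val
    (eq_of_isConj_of_closure_eq_top closure_closure_coe_preimage hconj
      (x := ⟨x, subset_closure hx⟩) hx)
  obtain ⟨a, ha, b, hb, hab⟩ := Set.one_lt_ncard_iff_nontrivial.mp hC1
  exact hab ((hCg a ha).trans (hCg b hb).symm)
end

section
/- In a finite p-group G with conjugacy class C and H = ⟨C⟩, if a normal subgroup N of H meets every H-orbit of C, then N = H. -/
/-!
A finite p-group is nilpotent, so every maximal subgroup of `H` is normal. If `N` were proper,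
it would lie in a maximal subgroup `M`; being normal, `M` contains every element of `C`, since
each one is conjugate to an element of `N`. Then `H = ⟨C⟩ ≤ M`, which is absurd.
-/

namespace Subgroup

theorem eq_top_of_forall_isConj_mem_of_closure_eq_top {H : Type*} [Group H] [Finite H]
    [Group.IsNilpotent H] {S : Set H} (hS : closure S = ⊤) {N : Subgroup H}
    (hN : ∀ s ∈ S, ∃ t ∈ N, IsConj s t) : N = ⊤ := by
  by_contra hne
  obtain ⟨M, hM, hNM⟩ := (eq_top_or_exists_le_coatom N).resolve_left hne
  have hMnormal : M.Normal :=
    NormalizerCondition.normal_of_coatom M Group.normalizerCondition_of_isNilpotent hM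
  have hSM : S ⊆ M := fun s hs => by
    obtain ⟨t, htN, hst⟩ := hN s hs
    obtain ⟨c, rfl⟩ := isConj_iff.mp hst.symm
    exact hMnormal.conj_mem t (hNM htN) c
  exact hM.1 (top_le_iff.mp (hS ▸ (closure_le M).mpr hSM))

theorem closure_le_of_forall_conj_mem {G : Type*} [Group G] {C : Set G} [Finite (closure C)]
    [Group.IsNilpotent (closure C)] {N : Subgroup G}
    (hN : ∀ a ∈ C, ∃ h ∈ closure C, h * a * h⁻¹ ∈ N) : closure C ≤ N := by
  rw [← subgroupOf_eq_top]
  refine eq_top_of_forall_isConj_mem_of_closure_eq_top closure_closure_coe_preimage ?_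
  rintro a (ha : (a : G) ∈ C)
  obtain ⟨h, hh, hconj⟩ := hN a ha
  exact ⟨⟨_, mul_mem (mul_mem hh a.2) (inv_mem hh)⟩, hconj, isConj_iff.mpr ⟨⟨h, hh⟩, rfl⟩⟩

end Subgroup

theorem normal_meeting_all_orbits_eq_general {p : ℕ} [Fact p.Prime]
    {G : Type*} [Group G] [Finite G] (hp : IsPGroup p G)
    (C : Set G)
    (H : Subgroup G) (hH : H = Subgroup.closure C)
    (N : Subgroup G) (hNH : N ≤ H)
    (hmeet : ∀ a ∈ C, ∃ x ∈ {b : G | ∃ h ∈ H, h * a * h⁻¹ = b}, x ∈ N) :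
    N = H := by
  subst hH
  have : Group.IsNilpotent (Subgroup.closure C) := (hp.to_subgroup _).isNilpotent
  refine le_antisymm hNH (Subgroup.closure_le_of_forall_conj_mem fun a ha => ?_)
  obtain ⟨x, ⟨h, hh, rfl⟩, hxN⟩ := hmeet a ha
  exact ⟨h, hh, hxN⟩

/-- In a finite p-group G with conjugacy class C and H = ⟨C⟩, if a normal
subgroup N of H meets every H-orbit of C, then N = H. -/
theorem normal_meeting_all_orbits_eq {p : ℕ} [Fact p.Prime]
    {G : Type*} [Group G] [Finite G] (hp : IsPGroup p G) (g : G)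
    (C : Set G) (hC : C = {x : G | IsConj g x})
    (H : Subgroup G) (hH : H = Subgroup.closure C)
    (N : Subgroup G) (hNH : N ≤ H)
    (hNormal : ∀ h ∈ H, ∀ n ∈ N, h * n * h⁻¹ ∈ N)
    (hmeet : ∀ a ∈ C, ∃ x ∈ {b : G | ∃ h ∈ H, h * a * h⁻¹ = b}, x ∈ N) :
    N = H :=
  normal_meeting_all_orbits_eq_general hp C H hH N hNH hmeet
end

section
/- Every maximal subrack of a conjugacy class C in a finite p-group is the union of all but one of the H-orbits of C, where H = ⟨C⟩. -/
/-- A subset of a conjugacy class `C` is a subrack if it is closed under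
conjugation `a ▷ b = a b a⁻¹`. -/
def IsSubrackOf {G : Type*} [Group G] (S C : Set G) : Prop :=
  S ⊆ C ∧ ∀ a ∈ S, ∀ b ∈ S, a * b * a⁻¹ ∈ S

/-!
Let `H = ⟨C⟩`. The complement of an `H`-orbit in `C` is a proper subrack, and two such
complements are comparable only when they are equal. So everything follows once every proper
subrack `T` of `C` is shown to miss some `H`-orbit. A finite rack is stable under conjugation by
the group it generates; so if `⟨T⟩ = H`, then `T` is a union of `H`-orbits. Otherwise `⟨T⟩` is a
proper subgroup of the finite nilpotent group `H`, hence lies in a proper normal subgroup `N`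
of `H`. Then `C ⊄ N`, and the orbit of any `a ∈ C \ N` stays outside `N ⊇ T`.
-/

section

open Subgroup

variable {G : Type*} [Group G]

lemma mem_normalizer_of_conj_mem [Finite G] {S : Set G} {a : G}
    (h : ∀ b ∈ S, a * b * a⁻¹ ∈ S) : a ∈ normalizer S := by
  have hmaps : Set.MapsTo (fun b => a * b * a⁻¹) S S := h
  have hbij := (Set.toFinite S).injOn_iff_bijOn_of_mapsTo hmaps |>.mp
    fun x _ y _ hxy => by simpa using hxy
  refine fun n => ⟨h n, fun hn => ?_⟩
  obtain ⟨m, hm, hmn⟩ := hbij.surjOn hn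
  rwa [← mul_left_cancel (mul_right_cancel hmn)]

lemma IsSubrackOf.closure_le_normalizer [Finite G] {S C : Set G} (hS : IsSubrackOf S C) :
    closure S ≤ normalizer S :=
  closure_le _ |>.mpr fun a ha => mem_normalizer_of_conj_mem (hS.2 a ha)

lemma exists_le_lt_le_normalizer_of_lt {K H : Subgroup G} [Finite H] [Group.IsNilpotent H]
    (hKH : K < H) : ∃ N : Subgroup G, K ≤ N ∧ N < H ∧ H ≤ normalizer N := by
  have hK : K.subgroupOf H ≠ ⊤ := fun h =>
    hKH.ne (le_antisymm hKH.le (subgroupOf_eq_top.mp h))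
  obtain ⟨N, hNmax, hKN⟩ := (eq_top_or_exists_le_coatom _).resolve_left hK
  have hNnormal : N.Normal := Group.normalizerCondition_of_isNilpotent.normal_of_coatom N hNmax
  have hNH : N.map H.subtype ≤ H := map_subtype_le N
  have hback : (N.map H.subtype).subgroupOf H = N :=
    comap_map_eq_self_of_injective H.subtype_injective N
  refine ⟨N.map H.subtype, ?_, lt_of_le_of_ne hNH fun h => hNmax.1 ?_, ?_⟩
  · simpa [map_subgroupOf_eq_of_le hKH.le] using map_mono (f := H.subtype) hKN
  · rw [← hback, h, subgroupOf_self]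
  · rw [← normal_subgroupOf_iff_le_normalizer hNH, hback]
    exact hNnormal

def conjOrbit (H : Subgroup G) (a : G) : Set G := {b : G | ∃ h ∈ H, h * a * h⁻¹ = b}

lemma mem_conjOrbit_self (H : Subgroup G) (a : G) : a ∈ conjOrbit H a :=
  ⟨1, H.one_mem, by group⟩

lemma conjOrbit_eq_of_mem {H : Subgroup G} {a b : G} (hb : b ∈ conjOrbit H a) :
    conjOrbit H b = conjOrbit H a := by
  obtain ⟨k, hk, rfl⟩ := hb
  ext c
  constructor
  · rintro ⟨h, hh, rfl⟩
    exact ⟨h * k, H.mul_mem hh hk, by group⟩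
  · rintro ⟨h, hh, rfl⟩
    exact ⟨h * k⁻¹, H.mul_mem hh (H.inv_mem hk), by group⟩

lemma disjoint_conjOrbit_of_le_normalizer {H : Subgroup G} {S : Set G} {a : G}
    (hS : H ≤ normalizer S) (ha : a ∉ S) : Disjoint (conjOrbit H a) S :=
  Set.disjoint_left.mpr fun _ ⟨_, hh, hb⟩ hbS => ha ((hS hh a).mpr (hb ▸ hbS))

lemma diff_conjOrbit_eq_of_subset {C : Set G} {H : Subgroup G} {a b : G} (hb : b ∈ C)
    (hsub : C \ conjOrbit H a ⊆ C \ conjOrbit H b) :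
    C \ conjOrbit H a = C \ conjOrbit H b := by
  have hbO : b ∈ conjOrbit H a := by
    by_contra hbO
    exact (hsub ⟨hb, hbO⟩).2 (mem_conjOrbit_self H b)
  rw [conjOrbit_eq_of_mem hbO]

lemma IsSubrackOf.diff_conjOrbit {C : Set G} (hC : IsSubrackOf C C) (a : G) :
    IsSubrackOf (C \ conjOrbit (closure C) a) C := by
  refine ⟨Set.sdiff_subset, fun u ⟨huC, _⟩ v ⟨hvC, hvO⟩ => ⟨hC.2 u huC v hvC, ?_⟩⟩
  rintro ⟨h, hh, huv⟩
  refine hvO ⟨u⁻¹ * h, mul_mem (inv_mem (subset_closure huC)) hh, ?_⟩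
  calc u⁻¹ * h * a * (u⁻¹ * h)⁻¹ = u⁻¹ * (h * a * h⁻¹) * u := by group
    _ = v := by rw [huv]; group

lemma exists_subset_diff_conjOrbit [Finite G] {C T : Set G}
    (hnil : Group.IsNilpotent (closure C)) (hT : IsSubrackOf T C) (hTC : T ≠ C) :
    ∃ a ∈ C, T ⊆ C \ conjOrbit (closure C) a := by
  suffices ∃ S : Set G, T ⊆ S ∧ closure C ≤ normalizer S ∧ ∃ a ∈ C, a ∉ S by
    obtain ⟨S, hTS, hS, a, haC, haS⟩ := this
    exact ⟨a, haC, Set.subset_sdiff.mpr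
      ⟨hT.1, (disjoint_conjOrbit_of_le_normalizer hS haS).symm.mono_left hTS⟩⟩
  rcases (closure_mono hT.1).lt_or_eq with hlt | heq
  · obtain ⟨N, hTN, hNC, hN⟩ := exists_le_lt_le_normalizer_of_lt hlt
    refine ⟨N, subset_closure.trans hTN, hN, ?_⟩
    by_contra! hCN
    exact hNC.not_ge (closure_le N |>.mpr hCN)
  · refine ⟨T, subset_rfl, heq ▸ hT.closure_le_normalizer, ?_⟩
    exact Set.exists_of_ssubset (hT.1.ssubset_of_ne hTC)

end

theorem maximal_subrack_iff_orbit_complement_general {p : ℕ} [Fact p.Prime]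
    {G : Type*} [Group G] [Finite G] (hp : IsPGroup p G) (g : G)
    (C : Set G) (hC : C = {x : G | IsConj g x})
    (H : Subgroup G) (hH : H = Subgroup.closure C)
    (M : Set G) :
    (IsSubrackOf M C ∧ M ≠ C ∧
        ∀ T : Set G, IsSubrackOf T C → T ≠ C → M ⊆ T → M = T) ↔
      ∃ a ∈ C, M = C \ {b : G | ∃ h ∈ H, h * a * h⁻¹ = b} := by
  subst hH
  have hrack : IsSubrackOf C C := ⟨subset_rfl, fun a _ b hb => by
    subst hC; exact hb.trans (isConj_iff.mpr ⟨a, rfl⟩)⟩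
  have hnil : Group.IsNilpotent (Subgroup.closure C) := (hp.to_subgroup _).isNilpotent
  have hproper {a : G} (ha : a ∈ C) : C \ conjOrbit (Subgroup.closure C) a ≠ C := fun h =>
    (h.symm ▸ ha : a ∈ C \ _).2 (mem_conjOrbit_self _ a)
  constructor
  · rintro ⟨hM, hMC, hmax⟩
    obtain ⟨a, ha, hMa⟩ := exists_subset_diff_conjOrbit hnil hM hMC
    exact ⟨a, ha, hmax _ (hrack.diff_conjOrbit a) (hproper ha) hMa⟩
  · rintro ⟨a, ha, rfl⟩
    refine ⟨hrack.diff_conjOrbit a, hproper ha, fun T hT hTC hMT => ?_⟩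
    obtain ⟨b, hb, hTb⟩ := exists_subset_diff_conjOrbit hnil hT hTC
    exact hMT.antisymm (diff_conjOrbit_eq_of_subset hb (hMT.trans hTb) ▸ hTb)

/-- Every maximal subrack of a conjugacy class C in a finite p-group is the
union of all but one of the H-orbits of C, where H = ⟨C⟩; conversely every
such orbit complement is a maximal subrack. -/
theorem maximal_subrack_iff_orbit_complement {p : ℕ} [Fact p.Prime]
    {G : Type*} [Group G] [Finite G] (hp : IsPGroup p G) (g : G)
    (C : Set G) (hC : C = {x : G | IsConj g x}) (hC1 : 1 < Nat.card C)
    (H : Subgroup G) (hH : H = Subgroup.closure C)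
    (M : Set G) :
    (IsSubrackOf M C ∧ M ≠ C ∧
        ∀ T : Set G, IsSubrackOf T C → T ≠ C → M ⊆ T → M = T) ↔
      ∃ a ∈ C, M = C \ {b : G | ∃ h ∈ H, h * a * h⁻¹ = b} :=
  maximal_subrack_iff_orbit_complement_general hp g C hC H hH M
end

section
/- If M is a maximal subrack of a conjugacy class C in a finite p-group meeting every H-orbit of C (H = ⟨C⟩), then the normalizer N_H(M) = {h ∈ H : hMh⁻¹ = M} is a proper non-normal subgroup of H. -/
open Subgroup

section

variable {G : Type*} [Group G]

/-- Conjugation by `m ∈ M` maps `M` injectively into itself, hence onto. -/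
theorem IsSubrackOf.subset_normalizer [Finite G] {M C : Set G} (hM : IsSubrackOf M C) :
    M ⊆ normalizer M :=
  fun m hm => mem_normalizer_fintype fun _ hn => hM.2 m hm _ hn

theorem subset_of_le_normalizer {C M : Set G} {H : Subgroup G}
    (hmeet : ∀ a ∈ C, ∃ x ∈ M, ∃ h ∈ H, h * a * h⁻¹ = x) (hH : H ≤ normalizer M) :
    C ⊆ M := by
  intro a ha
  obtain ⟨x, hx, h, hh, rfl⟩ := hmeet a ha
  exact (mem_set_normalizer_iff.mp (hH hh) a).mpr hx

theorem subset_of_conj_mem_of_subset {C M N : Set G} {H : Subgroup G}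
    (hmeet : ∀ a ∈ C, ∃ x ∈ M, ∃ h ∈ H, h * a * h⁻¹ = x) (hMN : M ⊆ N)
    (hN : ∀ h ∈ H, ∀ n ∈ N, h * n * h⁻¹ ∈ N) : C ⊆ N := by
  intro a ha
  obtain ⟨x, hx, h, hh, rfl⟩ := hmeet a ha
  simpa [mul_assoc] using hN h⁻¹ (H.inv_mem hh) _ (hMN hx)

end

theorem normalizer_of_maximal_subrack_general
    {G : Type*} [Group G] [Finite G]
    (C : Set G)
    (H : Subgroup G) (hH : H = Subgroup.closure C)
    (M : Set G)
    (hMsub : IsSubrackOf M C) (hMne : M ≠ C)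
    (hmeet : ∀ a ∈ C, ∃ x ∈ M, ∃ h ∈ H, h * a * h⁻¹ = x)
    (NHM : Set G)
    (hNHM : NHM = {h : G | h ∈ H ∧ (fun x => h * x * h⁻¹) '' M = M}) :
    NHM ⊂ (H : Set G) ∧
      ¬ (∀ h ∈ H, ∀ n ∈ NHM, h * n * h⁻¹ ∈ NHM) := by
  replace hNHM : NHM = (H ⊓ normalizer M : Subgroup G) := by
    ext h
    exact hNHM ▸ and_congr_right' mem_normalizer_iff_conj_image_eq.symm
  subst hNHM
  have hH_not_le : ¬ H ≤ normalizer M := fun hle =>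
    hMne (hMsub.1.antisymm (subset_of_le_normalizer hmeet hle))
  refine ⟨⟨fun _ hh => hh.1, fun hle => hH_not_le fun _ hh => (hle hh).2⟩, fun hN => ?_⟩
  have hMN : M ⊆ (H ⊓ normalizer M : Subgroup G) := fun m hm =>
    ⟨hH ▸ subset_closure (hMsub.1 hm), hMsub.subset_normalizer hm⟩
  have hCN := subset_of_conj_mem_of_subset hmeet hMN hN
  exact hH_not_le ((hH.le.trans ((closure_le _).2 hCN)).trans inf_le_right)

/-- If M is a maximal subrack of a conjugacy class C in a finite p-group
meeting every H-orbit of C (H = ⟨C⟩), then the normalizer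
N_H(M) = {h ∈ H : hMh⁻¹ = M} is a proper non-normal subgroup of H. -/
theorem normalizer_of_maximal_subrack {p : ℕ} [Fact p.Prime]
    {G : Type*} [Group G] [Finite G] (hp : IsPGroup p G) (g : G)
    (C : Set G) (hC : C = {x : G | IsConj g x}) (hC1 : 1 < Nat.card C)
    (H : Subgroup G) (hH : H = Subgroup.closure C)
    (M : Set G)
    (hMsub : IsSubrackOf M C) (hMne : M ≠ C)
    (hMmax : ∀ T : Set G, IsSubrackOf T C → T ≠ C → M ⊆ T → M = T)
    (hmeet : ∀ a ∈ C, ∃ x ∈ M, ∃ h ∈ H, h * a * h⁻¹ = x)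
    (NHM : Set G)
    (hNHM : NHM = {h : G | h ∈ H ∧ (fun x => h * x * h⁻¹) '' M = M}) :
    NHM ⊂ (H : Set G) ∧
      ¬ (∀ h ∈ H, ∀ n ∈ NHM, h * n * h⁻¹ ∈ NHM) :=
  normalizer_of_maximal_subrack_general C H hH M hMsub hMne hmeet NHM hNHM
end

section
/- If P is a finite poset with a closure operator φ (monotone, increasing, idempotent), then the order complexes of P and of the image φ(P) are homotopy equivalent. -/
open scoped BigOperators

/-- The geometric realization of the order complex of a finite poset `α`:
points of the standard simplex on `α` whose support is a chain in `α`. -/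
def orderComplexSpace (α : Type*) [PartialOrder α] [Fintype α] : Set (α → ℝ) :=
  {f | (∀ x, 0 ≤ f x) ∧ (∑ x, f x) = 1 ∧
    ∀ x y, f x ≠ 0 → f y ≠ 0 → x ≤ y ∨ y ≤ x}

/-!
Pushing mass forward along monotone maps makes the order complex a functor. With `r : P → φ(P)`
the corestriction of `φ` and `i` the inclusion, `r ∘ i = id` and `id ≤ i ∘ r`, so it suffices that
monotone maps `f ≤ g` induce homotopic maps. The homotopy moves the mass at `x` from `f x` to
`g x`, one vertex at a time from the top of the supporting chain downwards. At every moment the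
vertices still sitting at `f x` lie below the ones that have started moving, and `f x ≤ f y ≤ g y`
keeps the support a chain; a straight-line homotopy would not, as `f x₁` and `g x₂` need not be
comparable when `x₁ < x₂`.
-/

noncomputable section

namespace OrderComplex

open Finset

variable {α β γ : Type*}

section Pushforward

variable [Fintype α] [DecidableEq β]

def pushforward (f : α → β) (μ : α → ℝ) (y : β) : ℝ := ∑ x with f x = y, μ x

lemma sum_pushforward [Fintype β] (f : α → β) (μ : α → ℝ) :
    ∑ y, pushforward f μ y = ∑ x, μ x :=
  sum_fiberwise _ _ _

lemma pushforward_nonneg {μ : α → ℝ} (hμ : ∀ x, 0 ≤ μ x) (f : α → β) (y : β) :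
    0 ≤ pushforward f μ y :=
  sum_nonneg fun x _ => hμ x

lemma exists_eq_and_ne_zero_of_pushforward_ne_zero {f : α → β} {μ : α → ℝ} {y : β}
    (h : pushforward f μ y ≠ 0) : ∃ x, f x = y ∧ μ x ≠ 0 := by
  obtain ⟨x, hx, hμx⟩ := exists_ne_zero_of_sum_ne_zero h
  exact ⟨x, (mem_filter.mp hx).2, hμx⟩

@[simp]
lemma pushforward_zero (f : α → β) : pushforward f 0 = 0 := by
  ext y
  simp [pushforward]

lemma pushforward_id [DecidableEq α] (μ : α → ℝ) : pushforward id μ = μ := by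
  ext y
  simp [pushforward, filter_eq']

lemma pushforward_comp [Fintype β] [DecidableEq γ] (g : β → γ) (f : α → β) (μ : α → ℝ) :
    pushforward (g ∘ f) μ = pushforward g (pushforward f μ) := by
  ext z
  simp [pushforward, sum_fiberwise_eq_sum_filter]

lemma continuous_pushforward (f : α → β) : Continuous (pushforward f) := by
  unfold pushforward
  fun_prop

end Pushforward

section Map

variable [PartialOrder α] [Fintype α] [PartialOrder β] [Fintype β] [DecidableEq β]

lemma pushforward_mem (f : α →o β) {μ : α → ℝ} (hμ : μ ∈ orderComplexSpace α) :
    pushforward f μ ∈ orderComplexSpace β := by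
  obtain ⟨hnonneg, hsum, hchain⟩ := hμ
  refine ⟨pushforward_nonneg hnonneg f, (sum_pushforward f μ).trans hsum, fun y₁ y₂ h₁ h₂ => ?_⟩
  obtain ⟨x₁, rfl, hx₁⟩ := exists_eq_and_ne_zero_of_pushforward_ne_zero h₁
  obtain ⟨x₂, rfl, hx₂⟩ := exists_eq_and_ne_zero_of_pushforward_ne_zero h₂
  exact (hchain x₁ x₂ hx₁ hx₂).imp (f.mono ·) (f.mono ·)

def map (f : α →o β) : C(orderComplexSpace α, orderComplexSpace β) where
  toFun μ := ⟨pushforward f μ, pushforward_mem f μ.2⟩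
  continuous_toFun := (continuous_pushforward f).comp continuous_subtype_val |>.subtype_mk _

@[simp]
lemma coe_map_apply (f : α →o β) (μ : orderComplexSpace α) :
    (map f μ : β → ℝ) = pushforward f μ :=
  rfl

lemma map_id [DecidableEq α] : map (OrderHom.id : α →o α) = ContinuousMap.id _ := by
  ext μ : 2
  exact pushforward_id _

lemma map_comp [PartialOrder γ] [Fintype γ] [DecidableEq γ] (g : β →o γ) (f : α →o β) :
    map (g.comp f) = (map g).comp (map f) := by
  ext μ : 2
  exact pushforward_comp g f μ

end Map

section Transfer

variable [PartialOrder α] [Fintype α] [DecidableLT α] {μ : α → ℝ} {t : ℝ} {x y : α}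

def massAbove (μ : α → ℝ) (x : α) : ℝ := ∑ z with x < z, μ z

/-- The part of `μ x` that has moved by time `t`: the mass at `x` moves during the time interval
`[massAbove μ x, massAbove μ x + μ x]`. -/
def transfer (t : ℝ) (μ : α → ℝ) (x : α) : ℝ := min (μ x) (max 0 (t - massAbove μ x))

lemma massAbove_nonneg (hμ : ∀ x, 0 ≤ μ x) (x : α) : 0 ≤ massAbove μ x :=
  sum_nonneg fun z _ => hμ z

lemma add_massAbove_le_sum_of_subset (hμ : ∀ x, 0 ≤ μ x) {s : Finset α} (hx : x ∈ s)
    (hs : ∀ z, x < z → z ∈ s) : μ x + massAbove μ x ≤ ∑ z ∈ s, μ z := by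
  classical
  rw [massAbove, ← sum_insert (by simp)]
  exact sum_le_sum_of_subset_of_nonneg (insert_subset hx fun z hz => hs z (mem_filter.1 hz).2)
    fun z _ _ => hμ z

lemma add_massAbove_le_massAbove (hμ : ∀ x, 0 ≤ μ x) (h : y < x) :
    μ x + massAbove μ x ≤ massAbove μ y :=
  add_massAbove_le_sum_of_subset hμ (by simpa using h) fun z hz => by simpa using h.trans hz

lemma add_massAbove_le_sum (hμ : ∀ x, 0 ≤ μ x) (x : α) :
    μ x + massAbove μ x ≤ ∑ z, μ z :=
  add_massAbove_le_sum_of_subset hμ (mem_univ x) fun z _ => mem_univ z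

lemma transfer_nonneg (hμ : ∀ x, 0 ≤ μ x) (x : α) : 0 ≤ transfer t μ x :=
  le_min (hμ x) (le_max_left _ _)

lemma transfer_le (x : α) : transfer t μ x ≤ μ x :=
  min_le_left _ _

lemma transfer_zero (hμ : ∀ x, 0 ≤ μ x) : transfer 0 μ = 0 := by
  ext x
  rw [transfer, max_eq_left (by linarith [massAbove_nonneg hμ x]), min_eq_right (hμ x)]
  rfl

lemma transfer_one (hμ : μ ∈ orderComplexSpace α) : transfer 1 μ = μ := by
  ext x
  have := add_massAbove_le_sum hμ.1 x
  rw [hμ.2.1] at this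
  rw [transfer, max_eq_right (by linarith [hμ.1 x]), min_eq_left (by linarith)]

lemma transfer_of_eq_zero (h : μ x = 0) : transfer t μ x = 0 := by
  rw [transfer, h, min_eq_left (le_max_left _ _)]

lemma ne_zero_of_transfer_ne_zero (h : transfer t μ x ≠ 0) : μ x ≠ 0 :=
  fun h0 => h (transfer_of_eq_zero h0)

lemma ne_zero_of_transfer_ne (h : transfer t μ x ≠ μ x) : μ x ≠ 0 :=
  fun h0 => h (by rw [transfer_of_eq_zero h0, h0])

lemma le_of_transfer_ne_of_transfer_ne_zero (hμ : μ ∈ orderComplexSpace α)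
    (hx : transfer t μ x ≠ μ x) (hy : transfer t μ y ≠ 0) : x ≤ y := by
  obtain ⟨hnonneg, -, hchain⟩ := hμ
  have hxt : t < μ x + massAbove μ x := by
    by_contra! h
    exact hx (min_eq_left ((by linarith : μ x ≤ t - massAbove μ x).trans (le_max_right _ _)))
  have hyt : massAbove μ y < t := by
    by_contra! h
    exact hy (by rw [transfer, max_eq_left (by linarith), min_eq_right (hnonneg y)])
  rcases hchain x y (ne_zero_of_transfer_ne hx) (ne_zero_of_transfer_ne_zero hy) with hxy | hyx
  · exact hxy
  obtain rfl | hlt := hyx.eq_or_lt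
  · exact le_rfl
  · linarith [add_massAbove_le_massAbove hnonneg hlt]

lemma continuous_transfer : Continuous fun p : ℝ × (α → ℝ) => transfer p.1 p.2 := by
  unfold transfer massAbove
  fun_prop

end Transfer

section Homotopy

variable [PartialOrder α] [Fintype α] [DecidableLT α] [DecidableEq β]

def interpolate (f g : α → β) (t : ℝ) (μ : α → ℝ) : β → ℝ :=
  pushforward f (μ - transfer t μ) + pushforward g (transfer t μ)

lemma exists_of_interpolate_ne_zero {f g : α → β} {t : ℝ} {μ : α → ℝ} {y : β}
    (h : interpolate f g t μ y ≠ 0) :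
    (∃ x, f x = y ∧ transfer t μ x ≠ μ x) ∨ ∃ x, g x = y ∧ transfer t μ x ≠ 0 := by
  rcases eq_or_ne (pushforward f (μ - transfer t μ) y) 0 with hf | hf
  · right
    exact exists_eq_and_ne_zero_of_pushforward_ne_zero fun hg => h (by simp [interpolate, hf, hg])
  · left
    obtain ⟨x, hx, hne⟩ := exists_eq_and_ne_zero_of_pushforward_ne_zero hf
    exact ⟨x, hx, fun h' => hne (by simp [h'])⟩

lemma continuous_interpolate (f g : α → β) :
    Continuous fun p : ℝ × (α → ℝ) => interpolate f g p.1 p.2 :=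
  ((continuous_pushforward f).comp (continuous_snd.sub continuous_transfer)).add
    ((continuous_pushforward g).comp continuous_transfer)

variable [PartialOrder β] [Fintype β]

lemma interpolate_mem {f g : α →o β} (hfg : f ≤ g) (t : ℝ) {μ : α → ℝ}
    (hμ : μ ∈ orderComplexSpace α) : interpolate f g t μ ∈ orderComplexSpace β := by
  have hrest : ∀ x, 0 ≤ (μ - transfer t μ) x := fun x => sub_nonneg.2 (transfer_le x)
  have hmoved : ∀ x, 0 ≤ transfer t μ x := transfer_nonneg hμ.1
  refine ⟨fun y => add_nonneg (pushforward_nonneg hrest f y) (pushforward_nonneg hmoved g y),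
    ?_, fun y₁ y₂ h₁ h₂ => ?_⟩
  · calc ∑ y, interpolate f g t μ y = ∑ x, ((μ - transfer t μ) x + transfer t μ x) := by
          simp only [interpolate, Pi.add_apply, sum_add_distrib, sum_pushforward]
      _ = 1 := by simpa using hμ.2.1
  rcases exists_of_interpolate_ne_zero h₁ with ⟨x₁, rfl, hx₁⟩ | ⟨x₁, rfl, hx₁⟩ <;>
    rcases exists_of_interpolate_ne_zero h₂ with ⟨x₂, rfl, hx₂⟩ | ⟨x₂, rfl, hx₂⟩
  · exact (hμ.2.2 x₁ x₂ (ne_zero_of_transfer_ne hx₁) (ne_zero_of_transfer_ne hx₂)).imp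
      (f.mono ·) (f.mono ·)
  · exact Or.inl ((f.mono (le_of_transfer_ne_of_transfer_ne_zero hμ hx₁ hx₂)).trans (hfg x₂))
  · exact Or.inr ((f.mono (le_of_transfer_ne_of_transfer_ne_zero hμ hx₂ hx₁)).trans (hfg x₁))
  · exact (hμ.2.2 x₁ x₂ (ne_zero_of_transfer_ne_zero hx₁) (ne_zero_of_transfer_ne_zero hx₂)).imp
      (g.mono ·) (g.mono ·)

def homotopyOfLE {f g : α →o β} (hfg : f ≤ g) : (map f).Homotopy (map g) where
  toFun p := ⟨interpolate f g p.1 p.2, interpolate_mem hfg _ p.2.2⟩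
  continuous_toFun := ((continuous_interpolate f g).comp
    (continuous_subtype_val.prodMap continuous_subtype_val)).subtype_mk _
  map_zero_left μ := Subtype.ext <| by
    simp [interpolate, transfer_zero μ.2.1]
  map_one_left μ := Subtype.ext <| by
    simp [interpolate, transfer_one μ.2]

lemma map_homotopic_of_le {f g : α →o β} (hfg : f ≤ g) : (map f).Homotopic (map g) :=
  ⟨homotopyOfLE hfg⟩

end Homotopy

end OrderComplex

/-- If P is a finite poset with a closure operator φ (increasing, monotone,
idempotent), then the order complexes of P and of the image φ(P) are
homotopy equivalent. -/
theorem orderComplex_closureOperator_homotopyEquiv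
    {P : Type*} [PartialOrder P] [Fintype P] (φ : P → P)
    (hincr : ∀ x : P, x ≤ φ x)
    (hmono : ∀ x y : P, x ≤ y → φ x ≤ φ y)
    (hidem : ∀ x : P, φ (φ x) = φ x) :
    letI : Fintype (Set.range φ) := Set.Finite.fintype (Set.finite_range φ)
    Nonempty
      (ContinuousMap.HomotopyEquiv (orderComplexSpace P)
        (orderComplexSpace (Set.range φ))) := by
  classical
  -- after `classical`, so that this instance and not `Set.fintypeRange` is the one found
  let _ : Fintype (Set.range φ) := Set.Finite.fintype (Set.finite_range φ)
  let r : P →o Set.range φ := ⟨Set.rangeFactorization φ, hmono⟩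
  let i : Set.range φ →o P := OrderHom.Subtype.val _
  have hri : r.comp i = OrderHom.id := by
    ext ⟨_, x, rfl⟩
    exact hidem x
  have hir : OrderHom.id ≤ i.comp r := hincr
  refine ⟨⟨OrderComplex.map r, OrderComplex.map i, ?_, ?_⟩⟩
  · rw [← OrderComplex.map_comp, ← OrderComplex.map_id]
    exact (OrderComplex.map_homotopic_of_le hir).symm
  · rw [← OrderComplex.map_comp, hri, OrderComplex.map_id]
end
end
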